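/- For 1/2 ≤ a ≤ 1 and 0 < σ < 1, the function P(y) = (e^{σy}/C)·(exp((1−a)e^y)/(exp(e^y)−1) − e^{-y}) with C = Γ(σ)ζ(σ,a) is a probability density on ℝ: P ≥ 0 and ∫_ℝ P(y) dy = 1. -/

import Mathlib

/-!
For `a ≥ 1/2` the kernel `F(t) = e^{(1-a)t}/(e^t - 1) - 1/t` is negative on `(0, ∞)`: this is
`t e^{t/2} < e^t - 1`, i.e. `t/2 < sinh (t/2)`. For `0 < σ < 1` one has
`Γ(σ) ζ(σ, a) = ∫₀^∞ t^{σ-1} F(t) dt`, by analytic continuation: for `re s > 1` the expansion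
`e^{(1-a)t}/(e^t - 1) = ∑ₙ e^{-(n+a)t}` exhibits `Γ(s) ζ(s, a)` as a Mellin transform, and
subtracting `1/t` on `(0, 1]` only yields a kernel whose Mellin transform is holomorphic on
`re s > 0`, at the cost of the term `1/(s - 1)`. The substitution `t = e^y` turns this integral
into `∫ e^{σy} F(e^y) dy = C`, so `P(y) = e^{σy} F(e^y) / C` is a probability density.
-/

open MeasureTheory Real Set Filter Asymptotics Topology HurwitzZeta

noncomputable def hurwitzKernel (a t : ℝ) : ℝ := exp ((1 - a) * t) / (exp t - 1)

noncomputable def hurwitzKernelSubInv (a t : ℝ) : ℝ := hurwitzKernel a t - t⁻¹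

noncomputable def hurwitzKernelTrunc (a t : ℝ) : ℝ :=
  hurwitzKernel a t - (Ioc 0 1).indicator (fun t ↦ t⁻¹) t

lemma mul_exp_half_lt_exp_sub_one {t : ℝ} (ht : 0 < t) : t * exp (t / 2) < exp t - 1 := by
  have hsinh : t / 2 < sinh (t / 2) := self_lt_sinh_iff.2 (half_pos ht)
  have hsplit : exp t - 1 = exp (t / 2) * (2 * sinh (t / 2)) := by
    rw [sinh_eq, mul_div_cancel₀ _ two_ne_zero, mul_sub, ← exp_add, ← exp_add, add_halves,
      add_neg_cancel, exp_zero]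
  rw [hsplit]
  nlinarith [exp_pos (t / 2)]

lemma hurwitzKernelSubInv_neg {a t : ℝ} (ha : 1 / 2 ≤ a) (ht : 0 < t) :
    hurwitzKernelSubInv a t < 0 := by
  have hden : 0 < exp t - 1 := sub_pos.2 (one_lt_exp_iff.2 ht)
  have hexp : exp ((1 - a) * t) ≤ exp (t / 2) := exp_le_exp.2 (by nlinarith)
  rw [hurwitzKernelSubInv, hurwitzKernel, sub_neg, div_lt_iff₀ hden, inv_mul_eq_div,
    lt_div_iff₀ ht]
  nlinarith [mul_exp_half_lt_exp_sub_one ht]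

lemma abs_hurwitzKernelSubInv_le_one {a t : ℝ} (ha0 : 0 ≤ a) (ha1 : a ≤ 1) (ht : 0 < t) :
    |hurwitzKernelSubInv a t| ≤ 1 := by
  have hle : t ≤ exp t - 1 := by linarith [add_one_le_exp t]
  have hden : 0 < exp t - 1 := ht.trans_le hle
  have hsplit : hurwitzKernelSubInv a t = (exp ((1 - a) * t) - 1) / (exp t - 1)
      + ((exp t - 1)⁻¹ - t⁻¹) := by
    rw [hurwitzKernelSubInv, hurwitzKernel]; field_simp; ring
  have h1 : 0 ≤ (exp ((1 - a) * t) - 1) / (exp t - 1) := by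
    apply div_nonneg _ hden.le
    linarith [one_le_exp (by nlinarith : 0 ≤ (1 - a) * t)]
  have h2 : (exp ((1 - a) * t) - 1) / (exp t - 1) ≤ 1 := by
    rw [div_le_one hden]
    linarith [exp_le_exp.2 (by nlinarith : (1 - a) * t ≤ t)]
  have h3 : (exp t - 1)⁻¹ - t⁻¹ ≤ 0 := sub_nonpos.2 (inv_anti₀ ht hle)
  have h4 : -1 ≤ (exp t - 1)⁻¹ - t⁻¹ := by
    have hexp : exp t * (1 - t) ≤ 1 :=
      calc exp t * (1 - t) ≤ exp t * exp (-t) := by gcongr; linarith [add_one_le_exp (-t)]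
        _ = 1 := by rw [← exp_add, add_neg_cancel, exp_zero]
    rw [inv_eq_one_div, inv_eq_one_div, div_sub_div _ _ hden.ne' ht.ne',
      le_div_iff₀ (by positivity)]
    nlinarith
  rw [hsplit, abs_le]
  constructor <;> linarith

lemma hurwitzKernel_pos {a t : ℝ} (ht : 0 < t) : 0 < hurwitzKernel a t :=
  div_pos (exp_pos _) (sub_pos.2 (one_lt_exp_iff.2 ht))

lemma hurwitzKernel_le {a t : ℝ} (ht : 1 ≤ t) : hurwitzKernel a t ≤ 2 * exp (-a * t) := by
  have htwo : 2 ≤ exp t := by linarith [add_one_le_exp t]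
  have hsplit : exp ((1 - a) * t) = exp (-a * t) * exp t := by rw [← exp_add]; ring_nf
  rw [hurwitzKernel, div_le_iff₀ (by linarith), hsplit]
  nlinarith [exp_pos (-a * t)]

lemma hasSum_hurwitzKernel {a t : ℝ} (ht : 0 < t) :
    HasSum (fun n : ℕ ↦ exp (-(n + a) * t)) (hurwitzKernel a t) := by
  have hq : exp (-t) < 1 := exp_lt_one_iff.2 (neg_neg_of_pos ht)
  have hterm : ∀ n : ℕ, exp (-(n + a) * t) = exp (-a * t) * exp (-t) ^ n := fun n ↦ by
    rw [← exp_nat_mul, ← exp_add]; ring_nf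
  have hsum : hurwitzKernel a t = exp (-a * t) * (1 - exp (-t))⁻¹ := by
    have : exp t - 1 = exp t * (1 - exp (-t)) := by
      rw [mul_sub, ← exp_add, add_neg_cancel, exp_zero, mul_one]
    rw [hurwitzKernel, this, ← div_div, ← exp_sub, div_eq_mul_inv]
    ring_nf
  simp_rw [hterm, hsum]
  exact (hasSum_geometric_of_lt_one (exp_pos _).le hq).mul_left _

lemma continuousOn_hurwitzKernel (a : ℝ) : ContinuousOn (hurwitzKernel a) (Ioi 0) :=
  ContinuousOn.div (by fun_prop) (by fun_prop) fun _ ht ↦ (sub_pos.2 (one_lt_exp_iff.2 ht)).ne'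

lemma isBigO_hurwitzKernel_atTop (a : ℝ) :
    hurwitzKernel a =O[atTop] fun t ↦ exp (-a * t) := by
  refine IsBigO.of_bound 2 ?_
  filter_upwards [eventually_ge_atTop 1] with t ht
  rw [norm_of_nonneg (hurwitzKernel_pos (by linarith)).le, norm_of_nonneg (exp_pos _).le]
  exact hurwitzKernel_le ht

lemma isBigO_hurwitzKernelSubInv_atTop {a : ℝ} (ha : 0 < a) :
    hurwitzKernelSubInv a =O[atTop] (· ^ (-1 : ℝ)) := by
  have hinv : (fun t : ℝ ↦ t⁻¹) =ᶠ[atTop] (· ^ (-1 : ℝ)) := by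
    filter_upwards [eventually_gt_atTop 0] with t ht
    rw [rpow_neg_one]
  exact ((isBigO_hurwitzKernel_atTop a).trans (isLittleO_exp_neg_mul_rpow_atTop ha _).isBigO).sub
    hinv.isBigO

lemma isBigO_hurwitzKernelSubInv_nhdsGT {a : ℝ} (ha0 : 0 ≤ a) (ha1 : a ≤ 1) :
    hurwitzKernelSubInv a =O[𝓝[>] 0] fun _ ↦ (1 : ℝ) := by
  refine IsBigO.of_bound 1 ?_
  filter_upwards [self_mem_nhdsWithin] with t ht
  rw [norm_one, mul_one, norm_eq_abs]
  exact abs_hurwitzKernelSubInv_le_one ha0 ha1 ht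

lemma integrableOn_rpow_mul_hurwitzKernelSubInv {a σ : ℝ} (ha0 : 0 < a) (ha1 : a ≤ 1)
    (hσ0 : 0 < σ) (hσ1 : σ < 1) :
    IntegrableOn (fun t ↦ t ^ (σ - 1) * hurwitzKernelSubInv a t) (Ioi 0) := by
  have hloc : LocallyIntegrableOn (hurwitzKernelSubInv a) (Ioi 0) :=
    ((continuousOn_hurwitzKernel a).sub (continuousOn_inv₀.mono fun _ ht ↦ ne_of_gt ht)
      ).locallyIntegrableOn measurableSet_Ioi
  exact mellin_convergent_of_isBigO_scalar (b := 0) hloc (isBigO_hurwitzKernelSubInv_atTop ha0)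
    hσ1 (by simpa using isBigO_hurwitzKernelSubInv_nhdsGT ha0.le ha1) hσ0

lemma hurwitzKernelTrunc_of_mem_Ioc {a t : ℝ} (ht : t ∈ Ioc 0 1) :
    hurwitzKernelTrunc a t = hurwitzKernelSubInv a t := by
  rw [hurwitzKernelTrunc, indicator_of_mem ht, hurwitzKernelSubInv]

lemma hurwitzKernelTrunc_of_one_lt {a t : ℝ} (ht : 1 < t) :
    hurwitzKernelTrunc a t = hurwitzKernel a t := by
  rw [hurwitzKernelTrunc, indicator_of_notMem (fun h ↦ ht.not_ge h.2), sub_zero]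

lemma hurwitzKernelTrunc_eq_add {a t : ℝ} (ht : 0 < t) :
    hurwitzKernelTrunc a t = hurwitzKernelSubInv a t + (Ioi 1).indicator (fun t ↦ t⁻¹) t := by
  rcases le_or_gt t 1 with h1 | h1
  · rw [hurwitzKernelTrunc_of_mem_Ioc ⟨ht, h1⟩, indicator_of_notMem (notMem_Ioi.2 h1), add_zero]
  · rw [hurwitzKernelTrunc_of_one_lt h1, indicator_of_mem (mem_Ioi.2 h1), hurwitzKernelSubInv,
      sub_add_cancel]

lemma isBigO_hurwitzKernelTrunc_atTop (a : ℝ) :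
    (fun t ↦ (hurwitzKernelTrunc a t : ℂ)) =O[atTop] fun t ↦ exp (-a * t) := by
  refine Complex.isBigO_ofReal_left.2
    ((isBigO_hurwitzKernel_atTop a).congr' ?_ EventuallyEq.rfl)
  filter_upwards [eventually_gt_atTop 1] with t ht
  exact (hurwitzKernelTrunc_of_one_lt ht).symm

lemma isBigO_hurwitzKernelTrunc_nhdsGT {a : ℝ} (ha0 : 0 ≤ a) (ha1 : a ≤ 1) :
    (fun t ↦ (hurwitzKernelTrunc a t : ℂ)) =O[𝓝[>] 0] (· ^ (-0 : ℝ)) := by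
  refine Complex.isBigO_ofReal_left.2 ?_
  simp only [neg_zero, rpow_zero]
  refine (isBigO_hurwitzKernelSubInv_nhdsGT ha0 ha1).congr' ?_ EventuallyEq.rfl
  filter_upwards [Ioc_mem_nhdsGT zero_lt_one] with t ht
  exact (hurwitzKernelTrunc_of_mem_Ioc ht).symm

lemma locallyIntegrableOn_hurwitzKernelTrunc (a : ℝ) :
    LocallyIntegrableOn (fun t ↦ (hurwitzKernelTrunc a t : ℂ)) (Ioi 0) := by
  have hinv : LocallyIntegrableOn (fun t : ℝ ↦ t⁻¹) (Ioi 0) :=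
    (continuousOn_inv₀.mono fun _ ht ↦ ne_of_gt ht).locallyIntegrableOn measurableSet_Ioi
  have hind : LocallyIntegrableOn ((Ioc 0 1).indicator fun t : ℝ ↦ t⁻¹) (Ioi 0) :=
    hinv.mono (measurable_inv.indicator measurableSet_Ioc).aestronglyMeasurable
      (.of_forall fun _ ↦ norm_indicator_le_norm_self _ _)
  exact Complex.ofRealCLM.locallyIntegrableOn_comp
    (((continuousOn_hurwitzKernel a).locallyIntegrableOn measurableSet_Ioi).sub hind)

lemma mellinConvergent_hurwitzKernelTrunc {a : ℝ} (ha0 : 0 < a) (ha1 : a ≤ 1) {s : ℂ}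
    (hs : 0 < s.re) : MellinConvergent (fun t ↦ (hurwitzKernelTrunc a t : ℂ)) s :=
  mellinConvergent_of_isBigO_rpow_exp ha0 (locallyIntegrableOn_hurwitzKernelTrunc a)
    (isBigO_hurwitzKernelTrunc_atTop a) (isBigO_hurwitzKernelTrunc_nhdsGT ha0.le ha1) hs

lemma differentiableAt_mellin_hurwitzKernelTrunc {a : ℝ} (ha0 : 0 < a) (ha1 : a ≤ 1) {s : ℂ}
    (hs : 0 < s.re) : DifferentiableAt ℂ (mellin fun t ↦ (hurwitzKernelTrunc a t : ℂ)) s :=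
  mellin_differentiableAt_of_isBigO_rpow_exp ha0 (locallyIntegrableOn_hurwitzKernelTrunc a)
    (isBigO_hurwitzKernelTrunc_atTop a) (isBigO_hurwitzKernelTrunc_nhdsGT ha0.le ha1) hs

lemma mellin_hurwitzKernel {a : ℝ} (ha0 : 0 < a) (ha1 : a ≤ 1) {s : ℂ} (hs : 1 < s.re) :
    mellin (fun t ↦ (hurwitzKernel a t : ℂ)) s
      = Complex.Gamma s * hurwitzZeta a s := by
  have hseries := hasSum_mellin (a := fun _ : ℕ ↦ (1 : ℂ)) (p := fun n ↦ n + a)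
    (F := fun t ↦ (hurwitzKernel a t : ℂ)) (fun n ↦ Or.inr (by positivity)) (by linarith)
    (fun t ht ↦ by simpa using Complex.hasSum_ofReal.2 (hasSum_hurwitzKernel ht))
    (((summable_one_div_nat_add_rpow a s.re).2 hs).congr fun n ↦ by
      rw [norm_one, abs_of_pos (by positivity)])
  refine hseries.unique ?_
  simpa [div_eq_mul_inv] using
    (hasSum_hurwitzZeta_of_one_lt_re ⟨ha0.le, ha1⟩ hs).mul_left (Complex.Gamma s)

lemma Gamma_mul_hurwitzZeta_eq_mellin_of_one_lt_re {a : ℝ} (ha0 : 0 < a) (ha1 : a ≤ 1) {s : ℂ}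
    (hs : 1 < s.re) : Complex.Gamma s * hurwitzZeta a s
      = mellin (fun t ↦ (hurwitzKernelTrunc a t : ℂ)) s + 1 / (s - 1) := by
  have hpow := hasMellin_cpow_Ioc (-1) (s := s) (by simpa using hs)
  have hsum := hasMellin_add (mellinConvergent_hurwitzKernelTrunc ha0 ha1 (s := s) (by linarith))
    hpow.1
  rw [hpow.2, ← sub_eq_add_neg] at hsum
  rw [← mellin_hurwitzKernel ha0 ha1 hs, ← hsum.2]
  congr 1 with t
  by_cases ht : t ∈ Ioc 0 1
  · simp [hurwitzKernelTrunc, indicator_of_mem ht, Complex.cpow_neg_one]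
  · simp [hurwitzKernelTrunc, indicator_of_notMem ht]

lemma exists_differentiable_eq_sub_one_mul_hurwitzZeta (a : UnitAddCircle) :
    ∃ f : ℂ → ℂ, Differentiable ℂ f ∧ ∀ s ≠ 1, f s = (s - 1) * hurwitzZeta a s := by
  have hreg : Differentiable ℂ
      fun s ↦ hurwitzZeta a s - 1 / (s - 1) / Complex.Gammaℝ s := by
    intro s
    rcases eq_or_ne s 1 with rfl | hs
    · exact differentiableAt_hurwitzZeta_sub_one_div a
    · have hpole : DifferentiableAt ℂ (fun s ↦ (s - 1)⁻¹ * (Complex.Gammaℝ s)⁻¹) s :=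
        (DifferentiableAt.fun_inv (h := fun s : ℂ ↦ s - 1) (by fun_prop)
          (sub_ne_zero.2 hs)).fun_mul (Complex.differentiable_Gammaℝ_inv s)
      simpa only [div_eq_mul_inv, one_mul] using
        (differentiableAt_hurwitzZeta a hs).fun_sub hpole
  refine ⟨fun s ↦ (s - 1) * (hurwitzZeta a s - 1 / (s - 1) / Complex.Gammaℝ s)
    + (Complex.Gammaℝ s)⁻¹, ?_, fun s hs ↦ ?_⟩
  · exact ((differentiable_id.sub_const 1).mul hreg).add Complex.differentiable_Gammaℝ_inv
  · field_simp [sub_ne_zero.2 hs]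
    ring

lemma Gamma_mul_hurwitzZeta_eq_mellin {a : ℝ} (ha0 : 0 < a) (ha1 : a ≤ 1) {s : ℂ}
    (hs : 0 < s.re) (hs1 : s ≠ 1) : Complex.Gamma s * hurwitzZeta a s
      = mellin (fun t ↦ (hurwitzKernelTrunc a t : ℂ)) s + 1 / (s - 1) := by
  -- after multiplication by `s - 1` both sides are holomorphic on `0 < re s`
  obtain ⟨f, hf, hf_eq⟩ := exists_differentiable_eq_sub_one_mul_hurwitzZeta a
  set M := mellin fun t ↦ (hurwitzKernelTrunc a t : ℂ)
  set U := {z : ℂ | 0 < z.re}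
  have hU : IsOpen U := isOpen_lt continuous_const Complex.continuous_re
  have hlhs : DifferentiableOn ℂ (fun z ↦ Complex.Gamma z * f z) U := fun z hz ↦
    ((Complex.differentiableAt_Gamma z fun m hm ↦ by
      simp only [U, mem_ofPred_eq, hm, Complex.neg_re, Complex.natCast_re] at hz
      linarith [m.cast_nonneg (α := ℝ)]).mul (hf z)).differentiableWithinAt
  have hrhs : DifferentiableOn ℂ (fun z ↦ (z - 1) * M z + 1) U := fun z hz ↦
    (((differentiableAt_id.sub_const 1).mul
      (differentiableAt_mellin_hurwitzKernelTrunc ha0 ha1 hz)).add_const 1).differentiableWithinAt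
  have hagree : ∀ z : ℂ, 1 < z.re → Complex.Gamma z * f z = (z - 1) * M z + 1 := fun z hz ↦ by
    have hz1 : z - 1 ≠ 0 := sub_ne_zero.2 fun h ↦ by simp [h] at hz
    rw [hf_eq z (sub_ne_zero.1 hz1), mul_left_comm,
      Gamma_mul_hurwitzZeta_eq_mellin_of_one_lt_re ha0 ha1 hz]
    field_simp
    rfl
  have hnear : (fun z ↦ Complex.Gamma z * f z) =ᶠ[𝓝 2] fun z ↦ (z - 1) * M z + 1 :=
    eventually_of_mem ((isOpen_lt continuous_const Complex.continuous_re).mem_nhds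
      (by norm_num : (1 : ℝ) < (2 : ℂ).re)) hagree
  have heq := (hlhs.analyticOnNhd hU).eqOn_of_preconnected_of_eventuallyEq
    (hrhs.analyticOnNhd hU) (convex_halfSpace_re_gt 0).isPreconnected (by norm_num [U]) hnear hs
  have hs1' : s - 1 ≠ 0 := sub_ne_zero.2 hs1
  simp only [hf_eq s hs1] at heq
  field_simp
  linear_combination heq

lemma mellin_ofReal (f : ℝ → ℝ) (σ : ℝ) :
    mellin (fun t ↦ (f t : ℂ)) σ = ((∫ t in Ioi 0, t ^ (σ - 1) * f t : ℝ) : ℂ) := by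
  refine (setIntegral_congr_fun measurableSet_Ioi fun t ht ↦ ?_).trans integral_complex_ofReal
  rw [smul_eq_mul, Complex.ofReal_mul, Complex.ofReal_cpow (le_of_lt ht)]
  push_cast
  rfl

lemma integral_rpow_mul_hurwitzKernelTrunc {a σ : ℝ} (ha0 : 0 < a) (ha1 : a ≤ 1)
    (hσ0 : 0 < σ) (hσ1 : σ < 1) :
    ∫ t in Ioi 0, t ^ (σ - 1) * hurwitzKernelTrunc a t
      = (∫ t in Ioi 0, t ^ (σ - 1) * hurwitzKernelSubInv a t) - 1 / (σ - 1) := by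
  have htail : IntegrableOn (fun t : ℝ ↦ t ^ (σ - 2)) (Ioi 1) :=
    integrableOn_Ioi_rpow_of_lt (by linarith) zero_lt_one
  have hsplit : ∀ t ∈ Ioi (0 : ℝ), t ^ (σ - 1) * hurwitzKernelTrunc a t
      = t ^ (σ - 1) * hurwitzKernelSubInv a t + (Ioi 1).indicator (fun t ↦ t ^ (σ - 2)) t :=
    fun t ht ↦ by
      rw [hurwitzKernelTrunc_eq_add ht, mul_add]
      by_cases h1 : t ∈ Ioi 1
      · rw [indicator_of_mem h1, indicator_of_mem h1, ← rpow_neg_one, ← rpow_add ht]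
        ring_nf
      · rw [indicator_of_notMem h1, indicator_of_notMem h1, mul_zero]
  rw [setIntegral_congr_fun measurableSet_Ioi hsplit,
    integral_add (integrableOn_rpow_mul_hurwitzKernelSubInv ha0 ha1 hσ0 hσ1)
      ((htail.integrable_indicator measurableSet_Ioi).integrableOn),
    setIntegral_indicator measurableSet_Ioi, Ioi_inter_Ioi, max_eq_right zero_le_one,
    integral_Ioi_rpow_of_lt (by linarith) zero_lt_one, one_rpow]
  ring_nf

lemma Gamma_mul_hurwitzZeta_eq_integral {a σ : ℝ} (ha0 : 0 < a) (ha1 : a ≤ 1)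
    (hσ0 : 0 < σ) (hσ1 : σ < 1) : Complex.Gamma σ * hurwitzZeta a σ
      = ((∫ t in Ioi 0, t ^ (σ - 1) * hurwitzKernelSubInv a t : ℝ) : ℂ) := by
  rw [Gamma_mul_hurwitzZeta_eq_mellin ha0 ha1 (by simpa using hσ0)
      (by exact_mod_cast hσ1.ne), mellin_ofReal,
    integral_rpow_mul_hurwitzKernelTrunc ha0 ha1 hσ0 hσ1]
  push_cast
  ring

lemma integral_rpow_mul_hurwitzKernelSubInv_neg {a σ : ℝ} (ha : 1 / 2 ≤ a) (ha1 : a ≤ 1)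
    (hσ0 : 0 < σ) (hσ1 : σ < 1) :
    ∫ t in Ioi 0, t ^ (σ - 1) * hurwitzKernelSubInv a t < 0 := by
  have hneg : ∀ t ∈ Ioi (0 : ℝ), t ^ (σ - 1) * hurwitzKernelSubInv a t < 0 := fun t ht ↦
    mul_neg_of_pos_of_neg (rpow_pos_of_pos ht _) (hurwitzKernelSubInv_neg ha ht)
  have hint : IntegrableOn (fun t ↦ -(t ^ (σ - 1) * hurwitzKernelSubInv a t)) (Ioi 0) :=
    (integrableOn_rpow_mul_hurwitzKernelSubInv (by linarith) ha1 hσ0 hσ1).neg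
  have hsupp : Ioi 0 ⊆ Function.support fun t ↦ -(t ^ (σ - 1) * hurwitzKernelSubInv a t) :=
    fun t ht ↦ (neg_pos.2 (hneg t ht)).ne'
  have hpos := (setIntegral_pos_iff_support_of_nonneg_ae
    ((ae_restrict_mem measurableSet_Ioi).mono fun t ht ↦ (neg_pos.2 (hneg t ht)).le) hint).2
    (by rw [inter_eq_self_of_subset_right hsupp, volume_Ioi]; exact ENNReal.zero_lt_top)
  rw [integral_neg] at hpos
  linarith

lemma integral_exp_mul_comp_exp (f : ℝ → ℝ) (σ : ℝ) :
    ∫ y, exp (σ * y) * f (exp y) = ∫ t in Ioi 0, t ^ (σ - 1) * f t := by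
  rw [← range_exp, ← image_univ, integral_image_eq_integral_abs_deriv_smul MeasurableSet.univ
    (fun y _ ↦ (hasDerivAt_exp y).hasDerivWithinAt) exp_injective.injOn, Measure.restrict_univ]
  congr 1 with y
  rw [smul_eq_mul, abs_of_pos (exp_pos y), rpow_def_of_pos (exp_pos y), log_exp, ← mul_assoc,
    ← exp_add]
  ring_nf

/-- For 1/2 ≤ a ≤ 1 and 0 < σ < 1, with C = Γ(σ)ζ(σ,a) (the Hurwitz
zeta value, which is real), the function
P(y) = (e^{σy}/C)(exp((1−a)e^y)/(exp(e^y)−1) − e^{-y}) is a probability density on ℝ. -/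
theorem hurwitz_density (σ a : ℝ) (ha : 1 / 2 ≤ a) (ha1 : a ≤ 1)
    (hσ0 : 0 < σ) (hσ1 : σ < 1) (zr : ℝ)
    (hzr : HurwitzZeta.hurwitzZeta (a : UnitAddCircle) (σ : ℂ) = (zr : ℂ)) :
    (∀ y : ℝ, 0 ≤ Real.exp (σ * y) / (Real.Gamma σ * zr)
        * (Real.exp ((1 - a) * Real.exp y) / (Real.exp (Real.exp y) - 1)
            - Real.exp (-y))) ∧
    (∫ y : ℝ, Real.exp (σ * y) / (Real.Gamma σ * zr)
        * (Real.exp ((1 - a) * Real.exp y) / (Real.exp (Real.exp y) - 1)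
            - Real.exp (-y))) = 1 := by
  have hC : Real.Gamma σ * zr = ∫ t in Ioi 0, t ^ (σ - 1) * hurwitzKernelSubInv a t := by
    have h := Gamma_mul_hurwitzZeta_eq_integral (by linarith) ha1 hσ0 hσ1
    rw [hzr, Complex.Gamma_ofReal] at h
    exact_mod_cast h
  have hCneg : Real.Gamma σ * zr < 0 :=
    hC ▸ integral_rpow_mul_hurwitzKernelSubInv_neg ha ha1 hσ0 hσ1
  have hP : ∀ y, exp ((1 - a) * exp y) / (exp (exp y) - 1) - exp (-y)
      = hurwitzKernelSubInv a (exp y) := fun y ↦ by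
    rw [hurwitzKernelSubInv, hurwitzKernel, exp_neg]
  simp_rw [hP]
  refine ⟨fun y ↦ mul_nonneg_of_nonpos_of_nonpos (div_nonpos_of_nonneg_of_nonpos (exp_pos _).le
    hCneg.le) (hurwitzKernelSubInv_neg ha (exp_pos y)).le, ?_⟩
  simp_rw [div_mul_eq_mul_div]
  rw [integral_div, integral_exp_mul_comp_exp, ← hC, div_self hCneg.ne]
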